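/- arXiv:1903.11595 — 2 statements merged into one kernel-verified Lean document; each statement's English description precedes it below -/
import Mathlib

section
/- Let M be a compact metric space, f : M → M continuous, and φ : M → ℝ continuous. Suppose ∫ φ dμ < λ for every f-invariant Borel probability measure μ. Then there exists N ≥ 1 such that for all n ≥ N and all x ∈ M, (1/n) ∑_{i=0}^{n-1} φ(fⁱ(x)) < λ. -/
/-! If the conclusion failed, there would be orbit segments `x_k, f x_k, …, f^[n_k - 1] x_k`
with `n_k → ∞` along which the Birkhoff averages of `φ` stay `≥ λ`. The uniform measures on these
segments have a weak-* convergent subsequence, since the probability measures on a compact metric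
space form a compact metrizable space. Pushing such a measure forward by `f` changes the integral of
a bounded `g` only by `(g (f^[n] x) - g x) / n`, so the limit `μ` is `f`-invariant, while
`∫ φ dμ ≥ λ`. -/

open MeasureTheory Filter Finset Topology
open scoped ENNReal

section BirkhoffMeasure

variable {α : Type*} [MeasurableSpace α]

noncomputable def birkhoffMeasure (f : α → α) (x : α) (n : ℕ) : Measure α :=
  (n : ℝ≥0∞)⁻¹ • ∑ k ∈ range n, Measure.dirac (f^[k] x)

lemma isProbabilityMeasure_birkhoffMeasure (f : α → α) (x : α) {n : ℕ} (hn : n ≠ 0) :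
    IsProbabilityMeasure (birkhoffMeasure f x n) := by
  constructor
  simp only [birkhoffMeasure, Measure.smul_apply, Measure.finsetSum_apply, measure_univ, sum_const,
    card_range, nsmul_eq_mul, mul_one, smul_eq_mul]
  exact ENNReal.inv_mul_cancel (by exact_mod_cast hn) (ENNReal.natCast_ne_top n)

lemma map_birkhoffMeasure {f : α → α} (hf : Measurable f) (x : α) (n : ℕ) :
    (birkhoffMeasure f x n).map f = birkhoffMeasure f (f x) n := by
  simp only [birkhoffMeasure, Measure.map_smul, Measure.map_finset_sum hf.aemeasurable,
    Measure.map_dirac' hf, ← Function.iterate_succ_apply', Function.iterate_succ_apply]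

lemma integral_birkhoffMeasure {E : Type*} [NormedAddCommGroup E] [NormedSpace ℝ E]
    [CompleteSpace E] (f : α → α) {g : α → E} (hg : StronglyMeasurable g) (x : α) (n : ℕ) :
    ∫ y, g y ∂birkhoffMeasure f x n = birkhoffAverage ℝ f g n x := by
  rw [birkhoffMeasure, integral_smul_measure, integral_finsetSum_measure
    (fun k _ ↦ integrable_dirac' hg enorm_lt_top)]
  simp [birkhoffAverage, birkhoffSum, integral_dirac' _ _ hg]

end BirkhoffMeasure

theorem tendsto_birkhoffAverage_apply_sub_birkhoffAverage_of_tendsto {α E ι : Type*}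
    [NormedAddCommGroup E] [NormedSpace ℝ E] {g : α → E} (hg : Bornology.IsBounded (Set.range g))
    (f : α → α) {l : Filter ι} {n : ι → ℕ} (hn : Tendsto n l atTop) (x : ι → α) :
    Tendsto (fun i ↦ birkhoffAverage ℝ f g (n i) (f (x i)) - birkhoffAverage ℝ f g (n i) (x i))
      l (𝓝 0) := by
  obtain ⟨C, hC⟩ := Metric.isBounded_range_iff.1 hg
  have hCn : Tendsto (fun i ↦ C / n i) l (𝓝 0) :=
    tendsto_const_nhds.div_atTop (tendsto_natCast_atTop_atTop.comp hn)
  refine squeeze_zero_norm (fun i ↦ ?_) hCn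
  rw [← dist_eq_norm, dist_birkhoffAverage_apply_birkhoffAverage]
  gcongr
  exact hC _ _

theorem measurePreserving_of_tendsto_birkhoffMeasure {α ι : Type*} [TopologicalSpace α]
    [HasOuterApproxClosed α] [MeasurableSpace α] [BorelSpace α] {f : α → α} (hf : Continuous f)
    {l : Filter ι} [l.NeBot] {n : ι → ℕ} (hn : Tendsto n l atTop) (x : ι → α)
    {ν : ι → ProbabilityMeasure α} (hν : ∀ i, (ν i : Measure α) = birkhoffMeasure f (x i) (n i))
    {μ : ProbabilityMeasure α} (hμ : Tendsto ν l (𝓝 μ)) :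
    MeasurePreserving f μ μ := by
  have hfν : Tendsto (fun i ↦ (ν i).map hf.aemeasurable) l (𝓝 (μ.map hf.aemeasurable)) :=
    ((ProbabilityMeasure.continuous_map hf).tendsto μ).comp hμ
  have hfν' : Tendsto (fun i ↦ (ν i).map hf.aemeasurable) l (𝓝 μ) := by
    rw [ProbabilityMeasure.tendsto_iff_forall_integral_tendsto] at hμ ⊢
    intro g
    have hshift := tendsto_birkhoffAverage_apply_sub_birkhoffAverage_of_tendsto
      g.isBounded_range f hn x
    convert (hμ g).add hshift using 1
    · ext i
      simp only [ProbabilityMeasure.toMeasure_map, hν, map_birkhoffMeasure hf.measurable,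
        integral_birkhoffMeasure f g.continuous.stronglyMeasurable]
      ring
    · simp
  have hfμ : μ.map hf.aemeasurable = μ := tendsto_nhds_unique hfν hfν'
  exact ⟨hf.measurable, by rw [← ProbabilityMeasure.toMeasure_map μ hf.aemeasurable, hfμ]⟩

theorem exists_measurePreserving_le_integral_of_le_birkhoffAverage {M : Type*} [MetricSpace M]
    [CompactSpace M] [MeasurableSpace M] [BorelSpace M] {f : M → M} (hf : Continuous f)
    {φ : M → ℝ} (hφ : Continuous φ) {lam : ℝ} {n : ℕ → ℕ} (hn : Tendsto n atTop atTop)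
    (hn0 : ∀ k, n k ≠ 0) {x : ℕ → M} (hx : ∀ k, lam ≤ birkhoffAverage ℝ f φ (n k) (x k)) :
    ∃ μ : Measure M, IsProbabilityMeasure μ ∧ MeasurePreserving f μ μ ∧ lam ≤ ∫ y, φ y ∂μ := by
  let ν : ℕ → ProbabilityMeasure M := fun k ↦
    ⟨birkhoffMeasure f (x k) (n k), isProbabilityMeasure_birkhoffMeasure f (x k) (hn0 k)⟩
  obtain ⟨μ, σ, hσ, hμ⟩ := CompactSpace.tendsto_subseq ν
  refine ⟨μ, inferInstance, measurePreserving_of_tendsto_birkhoffMeasure hf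
    (hn.comp hσ.tendsto_atTop) (x ∘ σ) (fun _ ↦ rfl) hμ, ?_⟩
  have hφμ := ProbabilityMeasure.tendsto_iff_forall_integral_tendsto.1 hμ
    (BoundedContinuousFunction.mkOfCompact ⟨φ, hφ⟩)
  refine ge_of_tendsto' hφμ fun k ↦ ?_
  exact (hx (σ k)).trans_eq (integral_birkhoffMeasure f hφ.stronglyMeasurable _ _).symm

/-- If `∫ φ dμ < λ` for every `f`-invariant Borel probability measure `μ` on a
compact metric space `M`, then there is `N ≥ 1` such that all Birkhoff
averages of length `n ≥ N` are uniformly below `λ`. -/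
theorem stmt5 {M : Type*} [MetricSpace M] [CompactSpace M]
    [MeasurableSpace M] [BorelSpace M]
    (f : M → M) (hf : Continuous f) (φ : M → ℝ) (hφ : Continuous φ) (lam : ℝ)
    (hint : ∀ μ : Measure M, IsProbabilityMeasure μ →
      MeasurePreserving f μ μ → (∫ x, φ x ∂μ) < lam) :
    ∃ N : ℕ, 1 ≤ N ∧ ∀ n ≥ N, ∀ x : M,
      (1 / (n : ℝ)) * ∑ i ∈ Finset.range n, φ (f^[i] x) < lam := by
  by_contra hcon
  push Not at hcon
  choose n hn x hx using fun k : ℕ ↦ hcon (k + 1) k.succ_pos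
  have hlam : ∀ k, lam ≤ birkhoffAverage ℝ f φ (n k) (x k) := fun k ↦ by
    simpa [birkhoffAverage, birkhoffSum] using hx k
  obtain ⟨μ, hμ, hμf, hle⟩ := exists_measurePreserving_le_integral_of_le_birkhoffAverage hf hφ
    (tendsto_atTop_mono hn (tendsto_add_atTop_nat 1))
    (fun k ↦ (k.succ_pos.trans_le (hn k)).ne') hlam
  exact (hint μ hμ hμf).not_ge hle
end

section
/- Let f be a continuous map of a compact metric space with the specification property, and φ continuous. If every point x is φ-regular, i.e. the limit lim_{n→∞} (1/n)∑_{i=0}^{n-1} φ(fⁱ(x)) exists for every x, then the Birkhoff averages of φ at all periodic points are equal. -/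
/-
Suppose periodic points `p`, `q` have Birkhoff averages `α ≠ β`. Specification
lets a single orbit follow, alternately, the periodic orbits of `p` and `q` for longer and
longer stretches; choosing each stretch much longer than everything before it (including the
bounded transition gaps), the Birkhoff average of that orbit comes close to `α` and to `β`
infinitely often, so it does not converge. Specification only handles finitely many stretches
at a time; compactness produces a single point doing it for all of them.
-/

open Filter

/-- The specification property: for every `ε > 0` there is a relaxation time
`N` such that any finite collection of orbit segments can be `ε`-shadowed by a
single orbit, with gaps bounded by `N`. -/
def SpecificationProperty {M : Type*} [MetricSpace M] (f : M → M) : Prop :=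
  ∀ ε : ℝ, 0 < ε → ∃ N : ℕ, ∀ (r : ℕ) (x : ℕ → M) (k : ℕ → ℕ),
    ∃ (a : ℕ → ℕ) (z : M),
      (∀ i, i + 1 < r → a i ≤ a (i + 1) ∧ a (i + 1) ≤ a i + k i + N) ∧
      (∀ i < r, ∀ j ≤ k i, dist (f^[a i + j] z) (f^[j] (x i)) < ε)

open Finset Function Topology

namespace Function.IsPeriodicPt

variable {α M : Type*} {f : α → α} {x : α} {m : ℕ}

theorem birkhoffSum_mul [AddCommMonoid M] (hx : IsPeriodicPt f m x) (g : α → M) (c : ℕ) :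
    birkhoffSum f g (m * c) x = c • birkhoffSum f g m x := by
  induction c with
  | zero => simp
  | succ c ih => rw [Nat.mul_succ, birkhoffSum_add, ih, (hx.mul_const c).eq, succ_nsmul]

variable (R : Type*) [DivisionSemiring R] [CharZero R] [AddCommMonoid M] [Module R M]

theorem birkhoffSum_eq_smul_birkhoffAverage (hx : IsPeriodicPt f m x) (hm : m ≠ 0)
    (g : α → M) {K : ℕ} (hK : m ∣ K) :
    birkhoffSum f g K x = (K : R) • birkhoffAverage R f g m x := by
  obtain ⟨c, rfl⟩ := hK
  rw [hx.birkhoffSum_mul, birkhoffAverage, smul_smul, Nat.cast_mul, Nat.cast_comm, mul_assoc,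
    mul_inv_cancel₀ (Nat.cast_ne_zero.2 hm), mul_one, Nat.cast_smul_eq_nsmul]

theorem birkhoffAverage_eq_of_dvd (hx : IsPeriodicPt f m x) (hm : m ≠ 0) (g : α → M) {K : ℕ}
    (hK : m ∣ K) (hK0 : K ≠ 0) : birkhoffAverage R f g K x = birkhoffAverage R f g m x := by
  rw [birkhoffAverage, hx.birkhoffSum_eq_smul_birkhoffAverage R hm g hK, smul_smul,
    inv_mul_cancel₀ (Nat.cast_ne_zero.2 hK0), one_smul]

end Function.IsPeriodicPt

section BirkhoffReal

variable {α : Type*} {f : α → α} {φ : α → ℝ}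

theorem birkhoffAverage_eq_one_div_mul_sum (n : ℕ) (x : α) :
    birkhoffAverage ℝ f φ n x = 1 / (n : ℝ) * ∑ i ∈ range n, φ (f^[i] x) := by
  rw [birkhoffAverage, birkhoffSum, smul_eq_mul, one_div]

theorem abs_birkhoffSum_sub_le {μ C : ℝ} (hC : ∀ z, |φ z - μ| ≤ C) (n : ℕ) (x : α) :
    |birkhoffSum f φ n x - n * μ| ≤ n * C := by
  calc |birkhoffSum f φ n x - n * μ| = |∑ k ∈ range n, (φ (f^[k] x) - μ)| := by
        simp [birkhoffSum, sum_sub_distrib]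
    _ ≤ ∑ k ∈ range n, |φ (f^[k] x) - μ| := abs_sum_le_sum_abs _ _
    _ ≤ n * C := (sum_le_card_nsmul _ _ C fun k _ => hC _).trans_eq (by simp)

theorem abs_birkhoffAverage_le {C : ℝ} (hC : ∀ z, |φ z| ≤ C) (n : ℕ) (x : α) :
    |birkhoffAverage ℝ f φ n x| ≤ C := by
  rcases n.eq_zero_or_pos with rfl | hn
  · simpa using (abs_nonneg _).trans (hC x)
  rw [birkhoffAverage, smul_eq_mul, abs_mul, abs_inv, Nat.abs_cast, inv_mul_le_iff₀ (by positivity)]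
  simpa using abs_birkhoffSum_sub_le (f := f) (μ := 0) (by simpa using hC) n x

theorem abs_birkhoffAverage_add_sub_le {x y : α} {t K : ℕ} {μ C δ : ℝ} (hK : 0 < K)
    (hC : ∀ z, |φ z - μ| ≤ C) (hx : birkhoffSum f φ K x = K * μ)
    (hclose : ∀ j < K, dist (φ (f^[j] (f^[t] y))) (φ (f^[j] x)) ≤ δ) (ht : t * C ≤ K * δ) :
    |birkhoffAverage ℝ f φ (t + K) y - μ| ≤ 2 * δ := by
  have hδ : 0 ≤ δ := dist_nonneg.trans (hclose 0 hK)
  have hhead := abs_birkhoffSum_sub_le (f := f) hC t y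
  have htail : |birkhoffSum f φ K (f^[t] y) - birkhoffSum f φ K x| ≤ K * δ := by
    rw [← Real.dist_eq]
    refine (dist_birkhoffSum_birkhoffSum_le f φ K _ _).trans ?_
    exact (sum_le_card_nsmul _ _ δ fun j hj => hclose j (mem_range.1 hj)).trans_eq (by simp)
  have hsum : |birkhoffSum f φ (t + K) y - (t + K : ℕ) * μ| ≤ 2 * (K * δ) := by
    rw [birkhoffSum_add, Nat.cast_add]
    calc _ = |(birkhoffSum f φ t y - t * μ) +
            (birkhoffSum f φ K (f^[t] y) - birkhoffSum f φ K x)| := by rw [hx]; ring_nf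
      _ ≤ 2 * (K * δ) := (abs_add_le _ _).trans (by linarith)
  have hpos : (0 : ℝ) < (t + K : ℕ) := by positivity
  have hKle : (K : ℝ) ≤ (t + K : ℕ) := by exact_mod_cast Nat.le_add_left K t
  have heq : birkhoffAverage ℝ f φ (t + K) y - μ =
      (birkhoffSum f φ (t + K) y - (t + K : ℕ) * μ) / (t + K : ℕ) := by
    rw [birkhoffAverage, smul_eq_mul]
    field_simp
  rw [heq, abs_div, abs_of_pos hpos, div_le_iff₀ hpos]
  nlinarith

end BirkhoffReal

theorem abs_sub_le_of_tendsto_of_frequently {ι : Type*} {l : Filter ι} {u : ι → ℝ} {c μ r : ℝ}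
    (hu : Tendsto u l (𝓝 c)) (h : ∃ᶠ n in l, |u n - μ| ≤ r) : |c - μ| ≤ r :=
  (isClosed_le (continuous_id.sub continuous_const).abs continuous_const)
    |>.mem_of_frequently_of_tendsto h hu

theorem exists_dvd_lt_mul_sum_range_add_le (P D N : ℕ) (hP : 0 < P) :
    ∃ k : ℕ → ℕ, ∀ i, P ∣ k i ∧ i < k i ∧ D * ∑ l ∈ range i, (k l + N) ≤ k i := by
  set R := D * (N + 1) + 2 with hR
  refine ⟨fun i => P * R ^ i, fun i => ⟨dvd_mul_right _ _, ?_, ?_⟩⟩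
  · exact (Nat.lt_pow_self (by omega)).trans_le (Nat.le_mul_of_pos_left _ hP)
  · induction i with
    | zero => simp
    | succ i ih =>
      dsimp only at ih ⊢
      rw [sum_range_succ, pow_succ, ← mul_assoc]
      have hN : D * N ≤ P * R ^ i * (D * N) :=
        Nat.le_mul_of_pos_left _ (Nat.pos_of_ne_zero (by positivity))
      generalize P * R ^ i = u at ih hN ⊢
      generalize ∑ l ∈ range i, (P * R ^ l + N) = S at ih ⊢
      rw [hR]
      nlinarith

namespace SpecificationProperty

variable {M : Type*} [MetricSpace M] {f : M → M}

theorem exists_shadowing_finite (hspec : SpecificationProperty f) {ε : ℝ} (hε : 0 < ε) :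
    ∃ N : ℕ, ∀ (x : ℕ → M) (k : ℕ → ℕ) (r : ℕ), ∃ w : M, ∀ i < r,
      ∃ s ≤ ∑ l ∈ range i, (k l + N), ∀ j ≤ k i, dist (f^[j] (f^[s] w)) (f^[j] (x i)) < ε := by
  obtain ⟨N, hN⟩ := hspec ε hε
  refine ⟨N, fun x k r => ?_⟩
  obtain ⟨a, z, ha, hz⟩ := hN r x k
  have hbound : ∀ i < r, a 0 ≤ a i ∧ a i ≤ a 0 + ∑ l ∈ range i, (k l + N) := by
    intro i hi
    induction i with
    | zero => simp
    | succ i ih =>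
      have := ha i hi
      have := ih (by omega)
      rw [sum_range_succ]
      omega
  refine ⟨f^[a 0] z, fun i hi => ⟨a i - a 0, by have := hbound i hi; omega, fun j hj => ?_⟩⟩
  have hiter : f^[j] (f^[a i - a 0] (f^[a 0] z)) = f^[a i + j] z := by
    rw [← iterate_add_apply, ← iterate_add_apply]
    congr 1
    have := hbound i hi
    omega
  exact hiter ▸ hz i hi j hj

theorem exists_shadowing [CompactSpace M] (hspec : SpecificationProperty f) (hf : Continuous f)
    {ε : ℝ} (hε : 0 < ε) :
    ∃ N : ℕ, ∀ (x : ℕ → M) (k : ℕ → ℕ), ∃ (y : M) (t : ℕ → ℕ), ∀ i,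
      t i ≤ ∑ l ∈ range i, (k l + N) ∧ ∀ j ≤ k i, dist (f^[j] (f^[t i] y)) (f^[j] (x i)) ≤ ε := by
  obtain ⟨N, hN⟩ := hspec.exists_shadowing_finite hε
  refine ⟨N, fun x k => ?_⟩
  let A : ℕ → Set M := fun i => ⋃ s ∈ Set.Iic (∑ l ∈ range i, (k l + N)),
    ⋂ j ∈ Set.Iic (k i), {y | dist (f^[j] (f^[s] y)) (f^[j] (x i)) ≤ ε}
  have hA : ∀ i, IsClosed (A i) := fun i =>
    (Set.finite_Iic _).isClosed_biUnion fun s _ => isClosed_biInter fun j _ =>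
      isClosed_le (((hf.iterate j).comp (hf.iterate s)).dist continuous_const) continuous_const
  obtain ⟨y, hy⟩ := CompactSpace.iInter_nonempty hA fun u => by
    obtain ⟨r, hr⟩ := u.exists_nat_subset_range
    obtain ⟨w, hw⟩ := hN x k r
    refine ⟨w, Set.mem_iInter₂.2 fun i hi => ?_⟩
    obtain ⟨s, hs, hsw⟩ := hw i (mem_range.1 (hr hi))
    exact Set.mem_biUnion hs (Set.mem_iInter₂.2 fun j hj => (hsw j hj).le)
  simp only [A, Set.mem_iInter, Set.mem_iUnion, Set.mem_Iic, exists_prop] at hy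
  choose t ht hty using hy
  exact ⟨y, t, fun i => ⟨ht i, hty i⟩⟩

theorem exists_birkhoffAverage_near_periodic [CompactSpace M] (hspec : SpecificationProperty f)
    (hf : Continuous f) {φ : M → ℝ} (hφ : Continuous φ) {P : ℕ} (hP : 0 < P) {x : ℕ → M}
    (hx : ∀ i, IsPeriodicPt f P (x i)) {δ : ℝ} (hδ : 0 < δ) :
    ∃ (y : M) (T : ℕ → ℕ), ∀ i,
      i ≤ T i ∧ |birkhoffAverage ℝ f φ (T i) y - birkhoffAverage ℝ f φ P (x i)| ≤ δ := by
  obtain ⟨C, hC⟩ : ∃ C, ∀ z, |φ z| ≤ C := by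
    simpa using isCompact_univ.exists_bound_of_continuousOn hφ.continuousOn
  obtain ⟨ε, hε, hφε⟩ := Metric.uniformContinuous_iff.1
    (CompactSpace.uniformContinuous_of_continuous hφ) (δ / 2) (half_pos hδ)
  obtain ⟨N, hN⟩ := hspec.exists_shadowing hf (half_pos hε)
  obtain ⟨D, hD⟩ := exists_nat_ge (4 * C / δ)
  obtain ⟨k, hk⟩ := exists_dvd_lt_mul_sum_range_add_le P D N hP
  obtain ⟨y, t, ht⟩ := hN x k
  refine ⟨y, fun i => t i + k i, fun i => ⟨(hk i).2.1.le.trans (Nat.le_add_left _ _), ?_⟩⟩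
  obtain ⟨hPk, hik, hkD⟩ := hk i
  obtain ⟨hti, hshadow⟩ := ht i
  have hdelay : (t i : ℝ) * (2 * C) ≤ k i * (δ / 2) := by
    have hDt : (D * t i : ℝ) ≤ k i := by exact_mod_cast (Nat.mul_le_mul_left D hti).trans hkD
    have h2C : 2 * C ≤ D * (δ / 2) := by
      rw [div_le_iff₀ hδ] at hD
      linarith
    calc (t i : ℝ) * (2 * C) ≤ t i * (D * (δ / 2)) := by gcongr
      _ = D * t i * (δ / 2) := by ring
      _ ≤ k i * (δ / 2) := by gcongr
  have hosc : ∀ z, |φ z - birkhoffAverage ℝ f φ P (x i)| ≤ 2 * C := fun z =>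
    (abs_sub _ _).trans (by linarith [hC z, abs_birkhoffAverage_le (f := f) hC P (x i)])
  refine (abs_birkhoffAverage_add_sub_le (by omega) hosc
    ((hx i).birkhoffSum_eq_smul_birkhoffAverage ℝ hP.ne' φ hPk)
    (fun j hj => (hφε ((hshadow j hj.le).trans_lt (half_lt_self hε))).le) hdelay).trans_eq (by ring)

theorem exists_not_tendsto_birkhoffAverage [CompactSpace M] (hspec : SpecificationProperty f)
    (hf : Continuous f) {φ : M → ℝ} (hφ : Continuous φ) {p q : M} {mp mq : ℕ} (hmp : 0 < mp)
    (hmq : 0 < mq) (hp : IsPeriodicPt f mp p) (hq : IsPeriodicPt f mq q)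
    (hne : birkhoffAverage ℝ f φ mp p ≠ birkhoffAverage ℝ f φ mq q) :
    ∃ y, ∀ c, ¬Tendsto (birkhoffAverage ℝ f φ · y) atTop (𝓝 c) := by
  set α := birkhoffAverage ℝ f φ mp p
  set β := birkhoffAverage ℝ f φ mq q
  have hαβ : 0 < |α - β| := abs_pos.2 (sub_ne_zero.2 hne)
  have hp' : birkhoffAverage ℝ f φ (mp * mq) p = α :=
    hp.birkhoffAverage_eq_of_dvd ℝ hmp.ne' φ (dvd_mul_right _ _) (by positivity)
  have hq' : birkhoffAverage ℝ f φ (mp * mq) q = β :=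
    hq.birkhoffAverage_eq_of_dvd ℝ hmq.ne' φ (dvd_mul_left _ _) (by positivity)
  obtain ⟨y, T, hT⟩ := hspec.exists_birkhoffAverage_near_periodic hf hφ (Nat.mul_pos hmp hmq)
    (x := fun i => if Even i then p else q)
    (fun i => by split_ifs; exacts [hp.mul_const mq, hq.const_mul mp])
    (by positivity : 0 < |α - β| / 3)
  refine ⟨y, fun c hc => ?_⟩
  have hα : |c - α| ≤ |α - β| / 3 := abs_sub_le_of_tendsto_of_frequently hc <|
    frequently_atTop.2 fun n => ⟨T (2 * n), by linarith [(hT (2 * n)).1],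
      by simpa [hp'] using (hT (2 * n)).2⟩
  have hβ : |c - β| ≤ |α - β| / 3 := abs_sub_le_of_tendsto_of_frequently hc <|
    frequently_atTop.2 fun n => ⟨T (2 * n + 1), by linarith [(hT (2 * n + 1)).1],
      by simpa [hq'] using (hT (2 * n + 1)).2⟩
  linarith [abs_sub_le α c β, abs_sub_comm α c]

end SpecificationProperty

/-- If a continuous map with the specification property is such that the
Birkhoff average of a continuous `φ` exists at every point, then the Birkhoff
averages of `φ` at all periodic points coincide. -/
theorem stmt9 {M : Type*} [MetricSpace M] [CompactSpace M]
    (f : M → M) (hf : Continuous f) (hspec : SpecificationProperty f)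
    (φ : M → ℝ) (hφ : Continuous φ)
    (hreg : ∀ x : M, ∃ c : ℝ, Tendsto (fun n : ℕ => (1 / (n : ℝ)) *
      ∑ i ∈ Finset.range n, φ (f^[i] x)) atTop (nhds c)) :
    ∀ (p q : M) (mp mq : ℕ), 1 ≤ mp → 1 ≤ mq →
      f^[mp] p = p → f^[mq] q = q →
      (1 / (mp : ℝ)) * ∑ i ∈ Finset.range mp, φ (f^[i] p) =
        (1 / (mq : ℝ)) * ∑ i ∈ Finset.range mq, φ (f^[i] q) := by
  simp only [← birkhoffAverage_eq_one_div_mul_sum] at hreg ⊢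
  intro p q mp mq hmp hmq hp hq
  by_contra hne
  obtain ⟨y, hy⟩ := hspec.exists_not_tendsto_birkhoffAverage hf hφ hmp hmq hp hq hne
  obtain ⟨c, hc⟩ := hreg y
  exact hy c hc
end
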